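/- arXiv:2506.17727 — 5 statements merged into one kernel-verified Lean document; each statement's English description precedes it below -/
import Mathlib

section
/- Let K be a number field and U a torsion-free subgroup of the unit group (𝓞 K)ˣ. Form the semidirect product G = 𝓞 K ⋊ U, where the normal factor is the additive group of 𝓞 K and an element u ∈ U acts on 𝓞 K by multiplication by u. Then the map Hom(G, U) → Hom(U, U), sending a group homomorphism G → U to its restriction along the canonical inclusion U ↪ G, is a bijection. -/
/-!
A homomorphism `f : 𝓞 K ⋊ U → U` has abelian target, so it kills every commutator
`[u, y] = (u - 1) y`. If `u := f y ≠ 1`, then `f` kills the ideal `(u - 1)`, which has finite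
index `n`; hence `n • y` lies in it and `u ^ n = 1`, contradicting torsion-freeness. So `f` is
trivial on `𝓞 K` and determined by its restriction to `U`, and every `g : U → U` extends as
`g ∘ rightHom`.
-/

open NumberField SemidirectProduct

/-- The action of a subgroup `U ≤ (𝓞 K)ˣ` on the additive group of `𝓞 K`
(written multiplicatively), where `u ∈ U` acts by multiplication by `u`. -/
noncomputable def otAction (K : Type*) [Field K] [NumberField K] (U : Subgroup (𝓞 K)ˣ) :
    U →* MulAut (Multiplicative (𝓞 K)) where
  toFun u := AddEquiv.toMultiplicative (AddAut.mulLeft (u : (𝓞 K)ˣ))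
  map_one' := by ext x; simp <;> rfl
  map_mul' u v := by ext x; simp [mul_assoc] <;> rfl

theorem SemidirectProduct.map_inl_aut_of_commGroup {N G H : Type*} [Group N] [Group G]
    [CommGroup H] {φ : G →* MulAut N} (f : N ⋊[φ] G →* H) (g : G) (n : N) :
    f (inl (φ g n)) = f (inl n) := by
  rw [inl_aut, map_inv inr, map_mul, map_mul, map_inv, mul_right_comm, mul_inv_cancel, one_mul]

theorem isOfFinOrder_of_forall_map_ofAdd_mul_eq_one {S M : Type*} [CommRing S]
    [IsDedekindDomain S] [Module.Free ℤ S] [Module.Finite ℤ S] [Monoid M]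
    (f : Multiplicative S →* M) {a : S} (ha : a ≠ 0)
    (hf : ∀ y, f (.ofAdd (a * y)) = 1) (x : S) : IsOfFinOrder (f (.ofAdd x)) := by
  set n := Ideal.absNorm (Ideal.span {a})
  have hn : 0 < n := Nat.pos_of_ne_zero <| by simpa [n, Ideal.absNorm_eq_zero_iff] using ha
  obtain ⟨y, hy⟩ := Ideal.mem_span_singleton'.mp <|
    (Ideal.span {a}).mul_mem_right x (Ideal.absNorm_mem _)
  refine isOfFinOrder_iff_pow_eq_one.mpr ⟨n, hn, ?_⟩
  rw [← map_pow, ← ofAdd_nsmul, nsmul_eq_mul, ← hy, mul_comm, hf]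

theorem comp_inl_eq_one_of_otAction {K : Type*} [Field K] [NumberField K]
    {U : Subgroup (𝓞 K)ˣ} (hU : ∀ g : U, g ≠ 1 → ¬IsOfFinOrder g)
    (f : Multiplicative (𝓞 K) ⋊[otAction K U] U →* U) : f.comp inl = 1 := by
  refine MonoidHom.ext fun x => by_contra fun hx => ?_
  set u := f (inl x)
  have hu : ∀ y : 𝓞 K, f (inl (.ofAdd (((u : (𝓞 K)ˣ) - 1 : 𝓞 K) * y))) = 1 := fun y => by
    rw [sub_one_mul, ofAdd_sub, map_div, map_div, div_eq_one]
    exact map_inl_aut_of_commGroup f u (.ofAdd y)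
  have hu₀ : ((u : (𝓞 K)ˣ) - 1 : 𝓞 K) ≠ 0 :=
    sub_ne_zero.mpr fun h => hx (Subtype.ext (Units.ext h))
  exact hU u hx (isOfFinOrder_of_forall_map_ofAdd_mul_eq_one (f.comp inl) hu₀ hu x.toAdd)

/-- For a number field `K` and a torsion-free subgroup
`U ≤ (𝓞 K)ˣ`, restriction along the canonical inclusion `U ↪ 𝓞 K ⋊ U` gives a
bijection `Hom(𝓞 K ⋊ U, U) → Hom(U, U)`. -/
theorem stmt0 (K : Type*) [Field K] [NumberField K] (U : Subgroup (𝓞 K)ˣ)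
    (hU : ∀ g : U, g ≠ 1 → ¬IsOfFinOrder g) :
    Function.Bijective
      (fun f : (Multiplicative (𝓞 K) ⋊[otAction K U] U) →* U =>
        f.comp (SemidirectProduct.inr : U →* Multiplicative (𝓞 K) ⋊[otAction K U] U)) := by
  refine ⟨fun f₁ f₂ h => hom_ext ?_ h, fun g => ⟨g.comp rightHom, ?_⟩⟩
  · rw [comp_inl_eq_one_of_otAction hU, comp_inl_eq_one_of_otAction hU]
  · exact MonoidHom.ext fun u => congrArg g (rightHom_inr (φ := otAction K U) u)
end

section
/- Let K be a number field having exactly two non-real embeddings into ℂ (i.e. exactly two ring homomorphisms σ : K → ℂ with conj ∘ σ ≠ σ, necessarily a conjugate pair). Then every ring automorphism ρ of K satisfies ρ ∘ ρ = id. -/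
/-!
Fix a non-real embedding `σ`. For any automorphism `ρ`, the embedding `σ ∘ ρ` is again non-real,
so it is one of the only two non-real embeddings, `σ` and `conj ∘ σ`. In the first case `ρ = id`
by injectivity of `σ`; in the second, `σ ∘ ρ ∘ ρ = conj ∘ conj ∘ σ = σ`, so `ρ ∘ ρ = id`.
-/

open NumberField.ComplexEmbedding ComplexConjugate

namespace NumberField.ComplexEmbedding

variable {K : Type*} [Field K]

lemma eq_or_eq_conjugate_of_card_eq_two (h : Nat.card {φ : K →+* ℂ // ¬IsReal φ} = 2)
    {σ τ : K →+* ℂ} (hσ : ¬IsReal σ) (hτ : ¬IsReal τ) : τ = σ ∨ τ = conjugate σ := by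
  obtain ⟨y, -, hy⟩ := (Nat.card_eq_two_iff' ⟨σ, hσ⟩).mp h
  have hconj : ¬IsReal (conjugate σ) := isReal_conjugate_iff.not.mpr hσ
  have hconj_ne : conjugate σ ≠ σ := isReal_iff.not.mp hσ
  by_contra! hne
  have hτy : (⟨τ, hτ⟩ : {φ : K →+* ℂ // ¬IsReal φ}) = y := hy _ (by simpa using hne.1)
  have hconjy : (⟨conjugate σ, hconj⟩ : {φ : K →+* ℂ // ¬IsReal φ}) = y :=
    hy _ (by simpa using hconj_ne)
  exact hne.2 (congrArg Subtype.val (hτy.trans hconjy.symm))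

lemma ringEquiv_eq_refl_of_comp_eq (σ : K →+* ℂ) {ρ : K ≃+* K} (h : σ.comp ρ = σ) :
    ρ = RingEquiv.refl K := by
  ext x
  exact σ.injective (RingHom.congr_fun h x)

lemma ringEquiv_trans_self_eq_refl_of_comp_eq_conjugate (σ : K →+* ℂ) {ρ : K ≃+* K}
    (h : σ.comp ρ = conjugate σ) : ρ.trans ρ = RingEquiv.refl K := by
  ext x
  have hσρ (y : K) : σ (ρ y) = conj (σ y) := RingHom.congr_fun h y
  exact σ.injective (by simp [hσρ])

end NumberField.ComplexEmbedding

theorem stmt10_general (K : Type*) [Field K]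
    (h : Nat.card {σ : K →+* ℂ // (starRingEnd ℂ).comp σ ≠ σ} = 2)
    (ρ : K ≃+* K) :
    ρ.trans ρ = RingEquiv.refl K := by
  obtain ⟨⟨σ, hσ⟩⟩ := (Nat.card_pos_iff.mp (h ▸ two_pos)).1
  have hσρ : ¬IsReal (σ.comp (ρ : K →+* K)) := isReal_comp_iff.not.mpr hσ
  rcases eq_or_eq_conjugate_of_card_eq_two h hσ hσρ with hid | hconj
  · rw [ringEquiv_eq_refl_of_comp_eq σ hid]
    rfl
  · exact ringEquiv_trans_self_eq_refl_of_comp_eq_conjugate σ hconj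

/-- If a number field `K` has exactly two non-real
embeddings into `ℂ`, then every ring automorphism `ρ` of `K` satisfies
`ρ ∘ ρ = id`. -/
theorem stmt10 (K : Type*) [Field K] [NumberField K]
    (h : Nat.card {σ : K →+* ℂ // (starRingEnd ℂ).comp σ ≠ σ} = 2)
    (ρ : K ≃+* K) :
    ρ.trans ρ = RingEquiv.refl K :=
  stmt10_general K h ρ
end

section
/- Let K be a number field of odd degree over ℚ having exactly two non-real embeddings into ℂ (i.e. exactly two ring homomorphisms σ : K → ℂ with conj ∘ σ ≠ σ). Then the automorphism group of K is trivial: every ring automorphism of K is the identity. -/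
/-!
An automorphism `ρ` of `K` acts on the embeddings `K →+* ℂ` by precomposition, freely since
embeddings are injective, and it permutes the two non-real ones. A permutation of a two-element
set squares to the identity, so `ρ ^ 2` fixes a non-real embedding and hence `ρ ^ 2 = 1`. If
`ρ ≠ 1`, then `ρ` generates a group of order `2` acting freely on the `[K : ℚ]` embeddings, which
forces `[K : ℚ]` to be even.
-/

namespace RingAut

variable {K L : Type*}

section Semiring

variable [NonAssocSemiring K] [NonAssocSemiring L]

def precompPerm (ρ : RingAut K) : Equiv.Perm (K →+* L) where
  toFun σ := σ.comp ρ.toRingHom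
  invFun σ := σ.comp ρ.symm.toRingHom
  left_inv σ := by ext; simp
  right_inv σ := by ext; simp

lemma precompPerm_pow (ρ : RingAut K) (n : ℕ) :
    (precompPerm ρ : Equiv.Perm (K →+* L)) ^ n = precompPerm (ρ ^ n) := by
  induction n with
  | zero => rfl
  | succ n ih =>
    ext σ x
    rw [pow_succ, Equiv.Perm.mul_apply, ih, pow_succ']
    rfl

lemma comp_precompPerm_eq_self_iff (c : L →+* L) (ρ : RingAut K) (σ : K →+* L) :
    c.comp (precompPerm ρ σ) = precompPerm ρ σ ↔ c.comp σ = σ :=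
  (precompPerm ρ).injective.eq_iff (a := c.comp σ)

end Semiring

section DivisionRing

variable [DivisionRing K] [NonAssocSemiring L] [Nontrivial L]

lemma precompPerm_apply_eq_self_iff {ρ : RingAut K} {σ : K →+* L} :
    precompPerm ρ σ = σ ↔ ρ = 1 := by
  refine ⟨fun h => ?_, fun h => by subst h; rfl⟩
  ext x
  exact σ.injective (RingHom.congr_fun h x)

lemma sq_eq_one_of_card_eq_two {p : (K →+* L) → Prop} {ρ : RingAut K}
    (hp : ∀ σ, p (precompPerm ρ σ) ↔ p σ) (hcard : Nat.card {σ // p σ} = 2) : ρ ^ 2 = 1 := by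
  have : Finite {σ // p σ} := Nat.finite_of_card_ne_zero (by omega)
  obtain ⟨σ⟩ : Nonempty {σ // p σ} := Nat.card_pos_iff.mp (by omega) |>.1
  have hperm : ((precompPerm ρ).subtypePerm hp) ^ 2 = 1 := by
    simpa [Nat.card_perm, hcard] using
      pow_card_eq_one' (x := (precompPerm ρ).subtypePerm hp)
  have hσ : precompPerm (ρ ^ 2) σ.1 = σ.1 := by
    rw [← precompPerm_pow]
    simpa using congrArg Subtype.val (DFunLike.congr_fun hperm σ)
  exact precompPerm_apply_eq_self_iff.mp hσ

end DivisionRing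

lemma _root_.NumberField.prime_dvd_finrank_of_pow_eq_one [Field K] [NumberField K] {p : ℕ}
    [Fact p.Prime] {ρ : RingAut K} (hρ : ρ ^ p = 1) (hne : ρ ≠ 1) :
    p ∣ Module.finrank ℚ K := by
  classical
  rw [← NumberField.Embeddings.card K ℂ]
  by_contra hndvd
  have hpow : (precompPerm ρ : Equiv.Perm (K →+* ℂ)) ^ p ^ 1 = 1 := by
    rw [pow_one, precompPerm_pow, hρ]
    rfl
  obtain ⟨σ, hσ⟩ := Equiv.Perm.exists_fixed_point_of_prime hndvd hpow
  exact hne (precompPerm_apply_eq_self_iff.mp hσ)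

end RingAut

/-- A number field of odd degree over `ℚ` with exactly two
non-real embeddings into `ℂ` has trivial automorphism group. -/
theorem stmt11 (K : Type*) [Field K] [NumberField K]
    (hodd : Odd (Module.finrank ℚ K))
    (h : Nat.card {σ : K →+* ℂ // (starRingEnd ℂ).comp σ ≠ σ} = 2)
    (ρ : K ≃+* K) :
    ρ = RingEquiv.refl K := by
  by_contra hne
  have hsq : ρ ^ 2 = 1 :=
    RingAut.sq_eq_one_of_card_eq_two
      (fun σ => (RingAut.comp_precompPerm_eq_self_iff _ ρ σ).not) h
  have htwo : 2 ∣ Module.finrank ℚ K := NumberField.prime_dvd_finrank_of_pow_eq_one hsq hne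
  exact Nat.not_even_iff_odd.mpr hodd (even_iff_two_dvd.mpr htwo)
end

section
/- Let K be a number field with s real embeddings and t pairs of conjugate non-real embeddings, and let E⁺ ≤ (𝓞 K)ˣ be the subgroup of totally positive units, i.e. units u with σ(u) > 0 for every ring homomorphism σ : K → ℝ. Consider the map log : E⁺ → ℝ^{s+t} indexed by the infinite places w of K, sending u to the vector whose w-coordinate is log w(u) for real places w and log(w(u)²) for complex places w (equivalently, mult(w)·log w(u), where w(u) denotes the absolute value attached to the place w and mult(w) is 1 for real and 2 for complex places). Then the image log(E⁺) is contained in the hyperplane H = { x ∈ ℝ^{s+t} : Σ_w x_w = 0 }, is a discrete subgroup of ℝ^{s+t}, and its ℝ-linear span is all of H; that is, log(E⁺) is a full lattice in H (of rank s + t − 1). -/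
/-! The logarithm vector of a unit has coordinate sum `0` by the product formula, and dropping
the coordinate at a fixed place `w₀` is injective on the hyperplane `∑ w, x w = 0`. After this
projection the logarithm vectors of all units form the unit lattice of Dirichlet's theorem, which
is discrete and spans. Totally positive units contain all squares `u ^ 2`, whose logarithm vectors
are `2 • logVector u`, so their image still spans the whole hyperplane. -/

open NumberField NumberField.Units NumberField.InfinitePlace
open NumberField.Units.dirichletUnitTheorem

theorem Fintype.eq_of_sum_eq_of_forall_ne {ι M : Type*} [Fintype ι] [AddCommGroup M] (i₀ : ι)
    {x y : ι → M} (hsum : ∑ i, x i = ∑ i, y i) (h : ∀ i, i ≠ i₀ → x i = y i) : x = y := by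
  classical
  have h₀ : x i₀ = y i₀ := by
    rw [Fintype.sum_eq_add_sum_subtype_ne _ i₀, Fintype.sum_eq_add_sum_subtype_ne _ i₀,
      Fintype.sum_congr _ _ fun i : {i // i ≠ i₀} => h i.1 i.2] at hsum
    exact add_right_cancel hsum
  funext i
  by_cases hi : i = i₀
  · exact hi ▸ h₀
  · exact h i hi

def sumZeroSubmodule (ι R : Type*) [Fintype ι] [CommSemiring R] : Submodule R (ι → R) where
  carrier := {x | ∑ i, x i = 0}
  add_mem' hx hy := by simp_all [Finset.sum_add_distrib]
  zero_mem' := by simp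
  smul_mem' c x hx := by simp_all [← Finset.mul_sum]

namespace NumberField.Units

variable (K : Type*) [Field K]

noncomputable def logVector (u : (𝓞 K)ˣ) : InfinitePlace K → ℝ :=
  fun w => w.mult * Real.log (w (u : K))

theorem logVector_pow (u : (𝓞 K)ˣ) (n : ℕ) : logVector K (u ^ n) = (n : ℝ) • logVector K u := by
  funext w
  simp only [logVector, Pi.smul_apply, smul_eq_mul, Units.val_pow_eq_pow_val, map_pow,
    Real.log_pow]
  ring

variable [NumberField K]

def restrictLogSpace : (InfinitePlace K → ℝ) →ₗ[ℝ] logSpace K :=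
  LinearMap.funLeft ℝ ℝ Subtype.val

variable {K}

theorem restrictLogSpace_logVector (u : (𝓞 K)ˣ) :
    restrictLogSpace K (logVector K u) = logEmbedding K (Additive.ofMul u) :=
  rfl

theorem logVector_mem_sumZeroSubmodule (u : (𝓞 K)ˣ) :
    logVector K u ∈ sumZeroSubmodule (InfinitePlace K) ℝ :=
  sum_mult_mul_log u

theorem restrictLogSpace_injOn_sumZeroSubmodule :
    Set.InjOn (restrictLogSpace K) (sumZeroSubmodule (InfinitePlace K) ℝ) :=
  fun _ hx _ hy hxy => Fintype.eq_of_sum_eq_of_forall_ne w₀ (hx.trans hy.symm)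
    fun w hw => congrFun hxy ⟨w, hw⟩

instance : DiscreteTopology (Set.range (logVector K)) := by
  let g : Set.range (logVector K) → unitLattice K := fun x =>
    ⟨restrictLogSpace K x, by
      obtain ⟨u, hu⟩ := x.2
      exact hu ▸ ⟨Additive.ofMul u, trivial, rfl⟩⟩
  have hg : Continuous g :=
    (continuous_pi fun w => (continuous_apply w.1).comp continuous_subtype_val).subtype_mk _
  refine DiscreteTopology.of_continuous_injective hg ?_
  rintro ⟨_, u, rfl⟩ ⟨_, v, rfl⟩ hxy
  exact Subtype.ext <| restrictLogSpace_injOn_sumZeroSubmodule (logVector_mem_sumZeroSubmodule _)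
    (logVector_mem_sumZeroSubmodule _) (congrArg Subtype.val hxy)

theorem discreteTopology_image_logVector (s : Set (𝓞 K)ˣ) :
    DiscreteTopology (logVector K '' s) :=
  .of_subset inferInstance (Set.image_subset_range _ _)

theorem map_span_image_logVector_eq_top {s : Set (𝓞 K)ˣ} (hs : ∀ u, u ^ 2 ∈ s) :
    (Submodule.span ℝ (logVector K '' s)).map (restrictLogSpace K) = ⊤ := by
  rw [Submodule.map_span, eq_top_iff, ← unitLattice_span_eq_top K, Submodule.span_le]
  rintro _ ⟨u, -, rfl⟩
  have hu : logEmbedding K u = (2 : ℝ)⁻¹ • restrictLogSpace K (logVector K (u.toMul ^ 2)) := by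
    rw [logVector_pow, map_smul, smul_smul]
    norm_num [restrictLogSpace_logVector]
  rw [AddMonoidHom.coe_toIntLinearMap, hu]
  exact Submodule.smul_mem _ _ (Submodule.subset_span ⟨_, ⟨_, hs _, rfl⟩, rfl⟩)

theorem span_image_logVector_eq_sumZeroSubmodule {s : Set (𝓞 K)ˣ} (hs : ∀ u, u ^ 2 ∈ s) :
    Submodule.span ℝ (logVector K '' s) = sumZeroSubmodule (InfinitePlace K) ℝ := by
  have hle : Submodule.span ℝ (logVector K '' s) ≤ sumZeroSubmodule (InfinitePlace K) ℝ :=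
    Submodule.span_le.mpr <| Set.image_subset_iff.mpr fun u _ => logVector_mem_sumZeroSubmodule u
  refine le_antisymm hle fun x hx => ?_
  obtain ⟨y, hy, hyx⟩ : restrictLogSpace K x ∈ _ :=
    (map_span_image_logVector_eq_top hs).symm ▸ Submodule.mem_top
  rwa [restrictLogSpace_injOn_sumZeroSubmodule hx (hle hy) hyx.symm]

end NumberField.Units

theorem sq_mem_of_forall_pos {K : Type*} [Field K] {G : Subgroup (𝓞 K)ˣ}
    (hG : ∀ u : (𝓞 K)ˣ, (∀ σ : K →+* ℝ, 0 < σ (algebraMap (𝓞 K) K ↑u)) → u ∈ G)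
    (u : (𝓞 K)ˣ) : u ^ 2 ∈ G :=
  hG _ fun σ => by
    simpa only [Units.val_pow_eq_pow_val, map_pow] using
      even_two.pow_pos ((map_ne_zero σ).mpr (coe_ne_zero u))

/-- **Dirichlet's unit theorem for totally positive units.**
Let `K` be a number field and `E⁺ ≤ (𝓞 K)ˣ` the subgroup of totally positive
units. The logarithmic map `E⁺ → ℝ^{s+t}` (indexed by the infinite places `w`
of `K`, with `w`-coordinate `mult w · log w(u)`) has image contained in the
hyperplane `H = {x | ∑ w, x w = 0}`, this image is a discrete subset, and its
`ℝ`-linear span is all of `H`; i.e. `log(E⁺)` is a full lattice in `H`. -/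
theorem stmt13 (K : Type*) [Field K] [NumberField K]
    (Eplus : Subgroup (𝓞 K)ˣ)
    (hE : ∀ u : (𝓞 K)ˣ,
      u ∈ Eplus ↔ ∀ σ : K →+* ℝ, 0 < σ (algebraMap (𝓞 K) K ↑u))
    (f : Eplus → (InfinitePlace K → ℝ))
    (hf : ∀ (u : Eplus) (w : InfinitePlace K),
      f u w = (w.mult : ℝ) * Real.log (w (algebraMap (𝓞 K) K ↑(u : (𝓞 K)ˣ)))) :
    (∀ u : Eplus, ∑ w : InfinitePlace K, f u w = 0) ∧
      DiscreteTopology (Set.range f) ∧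
      (Submodule.span ℝ (Set.range f) : Set (InfinitePlace K → ℝ)) =
        {x : InfinitePlace K → ℝ | ∑ w : InfinitePlace K, x w = 0} := by
  have hf' : f = logVector K ∘ (↑) := funext fun u => funext (hf u)
  have hrange : Set.range f = logVector K '' Eplus := by
    rw [hf', Set.range_comp, Subtype.range_coe]
  refine ⟨fun u => hf' ▸ logVector_mem_sumZeroSubmodule (u : (𝓞 K)ˣ), ?_, ?_⟩
  · exact hrange ▸ discreteTopology_image_logVector _
  · rw [hrange, span_image_logVector_eq_sumZeroSubmodule
      (sq_mem_of_forall_pos fun u => (hE u).mpr)]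
    rfl
end

section
/- Let α = √(1 + √2) ∈ ℝ and let K = ℚ(α) be the subfield of ℝ generated by α over ℚ (a quartic number field, abstractly ℚ[X]/(X⁴ − 2X² − 1)). Then there exists a ring automorphism ρ of K with ρ(α) = −α; this ρ is not the identity, and for every non-real embedding σ : K → ℂ (i.e. every ring homomorphism σ : K → ℂ with conj ∘ σ ≠ σ) one has σ ∘ ρ = conj ∘ σ, where conj denotes complex conjugation on ℂ. -/
/-!
An `x` with `x² = 1 + √2` is a root of `X⁴ - 2X² - 1` but of no rational quadratic: squaring
`b x = -(1 + c + √2)` and comparing rational and `√2`-parts would force `c² + 1 = 0`. Hence the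
minimal polynomials of `α` and `-α` both have degree `> 2` and divide the same quartic, so they
coincide, and `α ↦ -α` extends to an automorphism `ρ` of `ℚ(α)`. An embedding `σ` sends `α` to a
root `z` of the quartic; then `z² = 1 ± √2` is real, so `z` is real or purely imaginary. For
non-real `σ` it is purely imaginary, so `conj z = -z = σ (ρ α)`, and embeddings of `ℚ(α)` are
determined by their value at `α`.
-/

open IntermediateField Polynomial ComplexConjugate

theorem Irrational.ratCast_add_ratCast_mul_eq_zero_iff {t : ℝ} (ht : Irrational t) {p q : ℚ} :
    (p : ℝ) + q * t = 0 ↔ p = 0 ∧ q = 0 := by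
  refine ⟨fun h => ?_, fun ⟨hp, hq⟩ => by simp [hp, hq]⟩
  have hq : q = 0 := by
    by_contra hq
    exact (ht.ratCast_mul hq).ne_rat (-p) (by push_cast; linarith)
  subst hq
  simpa using h

theorem minpoly.exists_sq_add_mul_add_eq_zero {K L : Type*} [Field K] [CommRing L] [Algebra K L]
    {x : L} (hx : IsIntegral K x) (h : (minpoly K x).natDegree ≤ 2) :
    ∃ b c : K, x ^ 2 + algebraMap K L b * x + algebraMap K L c = 0 := by
  set q := X ^ (2 - (minpoly K x).natDegree) * minpoly K x
  have hq : q.Monic := (monic_X_pow _).mul (minpoly.monic hx)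
  have hdeg : q.natDegree = 2 := by
    rw [(monic_X_pow _).natDegree_mul (minpoly.monic hx), natDegree_X_pow]
    omega
  have hroot : Polynomial.aeval x q = 0 := by simp [q]
  refine ⟨q.coeff 1, q.coeff 0, ?_⟩
  have := congrArg (Polynomial.aeval x) hq.as_sum
  rw [hroot, hdeg] at this
  simpa [Finset.sum_range_succ, Algebra.smul_def, add_assoc, add_comm, add_left_comm]
    using this.symm

theorem isConjRoot_of_natDegree_lt_add {K L : Type*} [Field K] [Field L] [Algebra K L]
    {p : K[X]} (hp : p ≠ 0) {x y : L} (hx : aeval x p = 0) (hy : aeval y p = 0)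
    (hdeg : p.natDegree < (minpoly K x).natDegree + (minpoly K y).natDegree) :
    IsConjRoot K x y := by
  have hxi : IsIntegral K x := IsAlgebraic.isIntegral ⟨p, hp, hx⟩
  have hyi : IsIntegral K y := IsAlgebraic.isIntegral ⟨p, hp, hy⟩
  by_contra hne
  have hndvd : ¬ minpoly K y ∣ minpoly K x := fun hd =>
    hne (minpoly.eq_of_irreducible_of_monic (minpoly.irreducible hxi)
      (aeval_eq_zero_of_dvd_aeval_eq_zero hd (minpoly.aeval K y)) (minpoly.monic hxi))
  have hcop := (minpoly.irreducible hyi).coprime_iff_not_dvd.mpr hndvd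
  have hle := natDegree_le_of_dvd (hcop.mul_dvd (minpoly.dvd K y hy) (minpoly.dvd K x hx)) hp
  rw [natDegree_mul (minpoly.ne_zero hyi) (minpoly.ne_zero hxi)] at hle
  omega

theorem IntermediateField.exists_algEquiv_gen_eq {F E : Type*} [Field F] [Field E] [Algebra F E]
    {x : E} (hx : IsIntegral F x) {y : F⟮x⟯} (hy : IsConjRoot F x y) :
    ∃ ρ : F⟮x⟯ ≃ₐ[F] F⟮x⟯, ρ (AdjoinSimple.gen F x) = y := by
  have : Algebra.IsAlgebraic F F⟮x⟯ := isAlgebraic_adjoin_simple hx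
  let pb := adjoin.powerBasis hx
  have hroot : aeval y (minpoly F pb.gen) = 0 := by
    rw [adjoin.powerBasis_gen, minpoly_gen, ← Subtype.coe_inj, ← aeval_coe]
    exact hy.aeval_eq_zero
  let φ := pb.lift y hroot
  exact ⟨AlgEquiv.ofBijective φ (Algebra.IsAlgebraic.algHom_bijective φ), pb.lift_gen y hroot⟩

theorem PowerBasis.ringHom_ext {K R : Type*} [Field K] [Algebra ℚ K] [Ring R] [Algebra ℚ R]
    (pb : PowerBasis ℚ K) {f g : K →+* R} (h : f pb.gen = g pb.gen) : f = g := by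
  have : f.toRatAlgHom = g.toRatAlgHom := pb.algHom_ext h
  exact RingHom.ext fun y => DFunLike.congr_fun this y

theorem Complex.conj_eq_self_or_neg_of_quartic {z : ℂ} (hz : z ^ 4 - 2 * z ^ 2 - 1 = 0) :
    conj z = z ∨ conj z = -z := by
  have hsq : (z ^ 2 - 1) ^ 2 = (Real.sqrt 2 : ℂ) ^ 2 := by
    rw [← ofReal_pow, Real.sq_sqrt zero_le_two]
    push_cast
    linear_combination hz
  have him : (z ^ 2).im = 0 := by
    rcases sq_eq_sq_iff_eq_or_eq_neg.mp hsq with h | h <;>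
      simp [sub_eq_iff_eq_add.mp h]
  have hreim : z.re * z.im = 0 := by
    simpa [sq, mul_im, mul_comm] using him
  rcases mul_eq_zero.mp hreim with h | h
  · right; apply Complex.ext <;> simp [h]
  · left; apply Complex.ext <;> simp [h]

section

variable {x : ℝ}

theorem quartic_eq_zero_of_sq_eq (hx : x ^ 2 = 1 + √2) : x ^ 4 - 2 * x ^ 2 - 1 = 0 := by
  linear_combination (x ^ 2 - 1 + √2) * hx + Real.sq_sqrt zero_le_two

theorem aeval_quartic_eq_zero (hx : x ^ 2 = 1 + √2) :
    aeval x (X ^ 4 - 2 * X ^ 2 - 1 : ℚ[X]) = 0 := by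
  simpa only [map_sub, map_pow, map_mul, map_ofNat, aeval_X, map_one]
    using quartic_eq_zero_of_sq_eq hx

theorem natDegree_quartic : (X ^ 4 - 2 * X ^ 2 - 1 : ℚ[X]).natDegree = 4 := by
  compute_degree!

theorem quartic_ne_zero : (X ^ 4 - 2 * X ^ 2 - 1 : ℚ[X]) ≠ 0 :=
  ne_zero_of_natDegree_gt (natDegree_quartic ▸ four_pos)

theorem isIntegral_of_sq_eq (hx : x ^ 2 = 1 + √2) : IsIntegral ℚ x :=
  IsAlgebraic.isIntegral ⟨_, quartic_ne_zero, aeval_quartic_eq_zero hx⟩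

theorem two_lt_natDegree_minpoly_of_sq_eq (hx : x ^ 2 = 1 + √2) :
    2 < (minpoly ℚ x).natDegree := by
  by_contra! h
  obtain ⟨b, c, hbc⟩ := minpoly.exists_sq_add_mul_add_eq_zero (isIntegral_of_sq_eq hx) h
  have hs : √2 ^ 2 = 2 := Real.sq_sqrt zero_le_two
  have key : (((1 + c) ^ 2 + 2 - b ^ 2 : ℚ) : ℝ) + ((2 * (1 + c) - b ^ 2 : ℚ) : ℝ) * √2 = 0 := by
    simp only [eq_ratCast] at hbc
    push_cast
    linear_combination (1 + c + √2 - b * x) * hbc + (b ^ 2 - (1 + c + √2 - b * x)) * hx - hs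
  obtain ⟨h1, h2⟩ := irrational_sqrt_two.ratCast_add_ratCast_mul_eq_zero_iff.mp key
  nlinarith [sq_nonneg c]

theorem isConjRoot_neg_of_sq_eq (hx : x ^ 2 = 1 + √2) : IsConjRoot ℚ x (-x) := by
  have hx' : (-x) ^ 2 = 1 + √2 := by rw [neg_sq, hx]
  refine isConjRoot_of_natDegree_lt_add quartic_ne_zero (aeval_quartic_eq_zero hx)
    (aeval_quartic_eq_zero hx') ?_
  linarith [two_lt_natDegree_minpoly_of_sq_eq hx, two_lt_natDegree_minpoly_of_sq_eq hx',
    natDegree_quartic]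

end

/-- Let `α = √(1 + √2)` and `K = ℚ(α) ⊆ ℝ`. There is a ring
automorphism `ρ` of `K` with `ρ(α) = -α`; it is not the identity, and for
every non-real embedding `σ : K → ℂ` one has `σ ∘ ρ = conj ∘ σ`. -/
theorem stmt15 :
    ∃ ρ : (ℚ⟮Real.sqrt (1 + Real.sqrt 2)⟯ : IntermediateField ℚ ℝ) ≃+*
          (ℚ⟮Real.sqrt (1 + Real.sqrt 2)⟯ : IntermediateField ℚ ℝ),
      ρ ⟨Real.sqrt (1 + Real.sqrt 2),
          IntermediateField.mem_adjoin_simple_self ℚ (Real.sqrt (1 + Real.sqrt 2))⟩ =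
        -⟨Real.sqrt (1 + Real.sqrt 2),
          IntermediateField.mem_adjoin_simple_self ℚ (Real.sqrt (1 + Real.sqrt 2))⟩ ∧
      ρ ≠ RingEquiv.refl _ ∧
      ∀ σ : (ℚ⟮Real.sqrt (1 + Real.sqrt 2)⟯ : IntermediateField ℚ ℝ) →+* ℂ,
        (starRingEnd ℂ).comp σ ≠ σ →
          σ.comp (ρ : (ℚ⟮Real.sqrt (1 + Real.sqrt 2)⟯ : IntermediateField ℚ ℝ) →+*
            (ℚ⟮Real.sqrt (1 + Real.sqrt 2)⟯ : IntermediateField ℚ ℝ)) =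
            (starRingEnd ℂ).comp σ := by
  set α := √(1 + √2)
  have hα : α ^ 2 = 1 + √2 := Real.sq_sqrt (by positivity)
  have hint := isIntegral_of_sq_eq hα
  obtain ⟨ρ, hρ⟩ := exists_algEquiv_gen_eq hint (y := -AdjoinSimple.gen ℚ α)
    (isConjRoot_neg_of_sq_eq hα)
  have hext (f g : ℚ⟮α⟯ →+* ℂ) (h : f (AdjoinSimple.gen ℚ α) = g (AdjoinSimple.gen ℚ α)) :
      f = g :=
    (adjoin.powerBasis hint).ringHom_ext (by rwa [adjoin.powerBasis_gen])
  refine ⟨ρ.toRingEquiv, hρ, fun h => ?_, fun σ hσ => ?_⟩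
  · have : -α = α := by simpa using congrArg Subtype.val (hρ.symm.trans (DFunLike.congr_fun h _))
    linarith [Real.sqrt_pos.mpr (by positivity : (0 : ℝ) < 1 + √2)]
  · set z := σ (AdjoinSimple.gen ℚ α)
    have hz : z ^ 4 - 2 * z ^ 2 - 1 = 0 := by
      have : AdjoinSimple.gen ℚ α ^ 4 - 2 * AdjoinSimple.gen ℚ α ^ 2 - 1 = 0 := by
        apply (algebraMap ℚ⟮α⟯ ℝ).injective
        simpa only [map_sub, map_pow, map_mul, map_ofNat, map_one, map_zero,
          AdjoinSimple.algebraMap_gen] using quartic_eq_zero_of_sq_eq hα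
      simpa only [map_sub, map_pow, map_mul, map_ofNat, map_one, map_zero] using congrArg σ this
    have hconj : conj z = -z :=
      (Complex.conj_eq_self_or_neg_of_quartic hz).resolve_left fun h => hσ (hext _ _ h)
    exact hext _ _ (by simp [hρ, z, hconj])
end
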